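/- Let η ∈ [0,1) and 1 < δ' < δ, and let (y, y') be as in the context with N_{δ,η}(y) < ∞. Set y(∞) := y(1) + ∫_1^∞ y'(x) dx. Then for every t ≥ 0: ‖y(1+t) − y(∞)‖_V² + ∫_0^∞ ‖y'(x+t)‖_V² v_{δ',η}(x) dx ≤ (2 + 1/(δ'−1)) · (max(1,t))^{−(δ−δ')} · N_{δ,η}(y)². (This expresses the polynomial rate of convergence of the shift semigroup S(t)y(x) = y(x+t) to the projection S_∞ y ≡ y(∞), measured from the modified Filipović space with weight v_{δ,η} into the one with weight v_{δ',η}.) -/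

import Mathlib

open MeasureTheory Set

/-!
The distance of `y (1 + t)` from `y ∞` is the tail integral `∫_{1+t}^∞ y'`, which the weighted
Cauchy–Schwarz inequality bounds by `(∫_{1+t}^∞ ‖y'‖² x^δ) · (1+t)^(1-δ) / (δ-1)`. The shifted
derivative term is controlled pointwise: `v_{δ',η}(x - t) ≤ max(1,t)^(δ'-δ) v_{δ,η}(x)` for `x > t`.
Both bounds are `max(1,t)^(δ'-δ)` times the weighted energy of `y'`.
-/

/-- The weight function `v_{δ,η}` on `(0,∞)`: `v_{δ,η}(x) = x^{η}` for `x ∈ (0,1]` and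
`v_{δ,η}(x) = x^{δ}` for `x ∈ (1,∞)`. -/
noncomputable def weightV (δ η x : ℝ) : ℝ :=
  if x ≤ 1 then x ^ η else x ^ δ

section WeightedCauchySchwarz

variable {α V : Type*} [MeasurableSpace α] {μ : Measure α} [NormedAddCommGroup V]
  {f : α → V} {w : α → ℝ}

lemma memLp_two_norm_mul_sqrt (hw : ∀ᵐ x ∂μ, 0 ≤ w x) (hf : AEStronglyMeasurable f μ)
    (hwm : AEStronglyMeasurable w μ) (hfw : Integrable (fun x => ‖f x‖ ^ 2 * w x) μ) :
    MemLp (fun x => ‖f x‖ * √(w x)) 2 μ := by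
  refine (memLp_two_iff_integrable_sq
    (hf.norm.mul (Real.continuous_sqrt.comp_aestronglyMeasurable hwm))).2 (hfw.congr ?_)
  filter_upwards [hw] with x hx
  simp only [Pi.mul_apply, mul_pow, Real.sq_sqrt hx]

lemma memLp_two_sqrt_inv (hwi : Integrable (fun x => (w x)⁻¹) μ) (hw : ∀ᵐ x ∂μ, 0 ≤ w x) :
    MemLp (fun x => √(w x)⁻¹) 2 μ := by
  refine (memLp_two_iff_integrable_sq
    (Real.continuous_sqrt.comp_aestronglyMeasurable hwi.aestronglyMeasurable)).2 (hwi.congr ?_)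
  filter_upwards [hw] with x hx
  simp only [Real.sq_sqrt (inv_nonneg.2 hx)]

variable (hw : ∀ᵐ x ∂μ, 0 < w x) (hf : AEStronglyMeasurable f μ)
  (hwm : AEStronglyMeasurable w μ) (hfw : Integrable (fun x => ‖f x‖ ^ 2 * w x) μ)
  (hwi : Integrable (fun x => (w x)⁻¹) μ)
include hw

lemma norm_mul_sqrt_mul_sqrt_inv_ae_eq :
    (fun x => ‖f x‖ * √(w x) * √(w x)⁻¹) =ᵐ[μ] fun x => ‖f x‖ := by
  filter_upwards [hw] with x hx
  rw [mul_assoc, ← Real.sqrt_mul hx.le, mul_inv_cancel₀ hx.ne', Real.sqrt_one, mul_one]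

include hf hwm hfw hwi

lemma integrable_of_integrable_sq_mul_weight : Integrable f μ := by
  have hw0 : ∀ᵐ x ∂μ, 0 ≤ w x := hw.mono fun x hx => hx.le
  have hprod :=
    (memLp_two_norm_mul_sqrt hw0 hf hwm hfw).integrable_mul (memLp_two_sqrt_inv hwi hw0)
  exact (integrable_norm_iff hf).1 (hprod.congr (norm_mul_sqrt_mul_sqrt_inv_ae_eq hw))

lemma sq_norm_integral_le_integral_sq_mul_weight_mul_integral_inv [NormedSpace ℝ V] :
    ‖∫ x, f x ∂μ‖ ^ 2 ≤ (∫ x, ‖f x‖ ^ 2 * w x ∂μ) * ∫ x, (w x)⁻¹ ∂μ := by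
  have hw0 : ∀ᵐ x ∂μ, 0 ≤ w x := hw.mono fun x hx => hx.le
  have hHolder := integral_mul_le_Lp_mul_Lq_of_nonneg Real.HolderConjugate.two_two
    (f := fun x => ‖f x‖ * √(w x)) (g := fun x => √(w x)⁻¹)
    (ae_of_all _ fun x => by positivity) (ae_of_all _ fun x => by positivity)
    (by simpa using memLp_two_norm_mul_sqrt hw0 hf hwm hfw)
    (by simpa using memLp_two_sqrt_inv hwi hw0)
  have hprod : ∫ x, ‖f x‖ * √(w x) * √(w x)⁻¹ ∂μ = ∫ x, ‖f x‖ ∂μ :=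
    integral_congr_ae (norm_mul_sqrt_mul_sqrt_inv_ae_eq hw)
  have hleft : ∫ x, (‖f x‖ * √(w x)) ^ (2 : ℝ) ∂μ = ∫ x, ‖f x‖ ^ 2 * w x ∂μ := by
    refine integral_congr_ae (hw0.mono fun x hx => ?_)
    simp only [Real.rpow_two, mul_pow, Real.sq_sqrt hx]
  have hright : ∫ x, √(w x)⁻¹ ^ (2 : ℝ) ∂μ = ∫ x, (w x)⁻¹ ∂μ := by
    refine integral_congr_ae (hw0.mono fun x hx => ?_)
    simp only [Real.rpow_two, Real.sq_sqrt (inv_nonneg.2 hx)]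
  rw [hprod, hleft, hright, ← Real.sqrt_eq_rpow, ← Real.sqrt_eq_rpow] at hHolder
  have hA : 0 ≤ ∫ x, ‖f x‖ ^ 2 * w x ∂μ :=
    integral_nonneg_of_ae (hw0.mono fun x hx => by positivity)
  have hB : 0 ≤ ∫ x, (w x)⁻¹ ∂μ := integral_nonneg_of_ae (hw0.mono fun x hx => inv_nonneg.2 hx)
  calc ‖∫ x, f x ∂μ‖ ^ 2 ≤ (∫ x, ‖f x‖ ∂μ) ^ 2 :=
        pow_le_pow_left₀ (norm_nonneg _) (norm_integral_le_integral_norm _) 2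
    _ ≤ (√(∫ x, ‖f x‖ ^ 2 * w x ∂μ) * √(∫ x, (w x)⁻¹ ∂μ)) ^ 2 :=
        pow_le_pow_left₀ (integral_nonneg fun x => norm_nonneg _) hHolder 2
    _ = _ := by rw [mul_pow, Real.sq_sqrt hA, Real.sq_sqrt hB]

end WeightedCauchySchwarz

section PowerWeight

variable {V : Type*} [NormedAddCommGroup V] {f : ℝ → V} {a δ : ℝ}

lemma integrableOn_Ioi_inv_rpow (ha : 0 < a) (hδ : 1 < δ) :
    IntegrableOn (fun x => (x ^ δ)⁻¹) (Ioi a) :=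
  (integrableOn_Ioi_rpow_of_lt (neg_lt_neg hδ) ha).congr_fun
    (fun _ hx => Real.rpow_neg (ha.trans hx).le δ) measurableSet_Ioi

lemma integral_Ioi_inv_rpow (ha : 0 < a) (hδ : 1 < δ) :
    ∫ x in Ioi a, (x ^ δ)⁻¹ = a ^ (1 - δ) / (δ - 1) := by
  rw [← setIntegral_congr_fun measurableSet_Ioi fun _ hx => Real.rpow_neg (ha.trans hx).le δ,
    integral_Ioi_rpow_of_lt (neg_lt_neg hδ) ha, neg_add_eq_sub, neg_div, ← div_neg, neg_sub]

lemma ae_restrict_Ioi_rpow_pos (ha : 0 ≤ a) : ∀ᵐ x ∂volume.restrict (Ioi a), 0 < x ^ δ :=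
  ae_restrict_of_forall_mem measurableSet_Ioi fun _ hx => Real.rpow_pos_of_pos (ha.trans_lt hx) δ

variable (ha : 0 < a) (hδ : 1 < δ) (hf : AEStronglyMeasurable f (volume.restrict (Ioi a)))
  (hfw : IntegrableOn (fun x => ‖f x‖ ^ 2 * x ^ δ) (Ioi a))
include ha hδ hf hfw

lemma integrableOn_Ioi_of_integrableOn_sq_mul_rpow : IntegrableOn f (Ioi a) :=
  integrable_of_integrable_sq_mul_weight (ae_restrict_Ioi_rpow_pos ha.le) hf
    (measurable_id.pow_const δ).aestronglyMeasurable hfw (integrableOn_Ioi_inv_rpow ha hδ)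

lemma sq_norm_setIntegral_Ioi_le [NormedSpace ℝ V] :
    ‖∫ x in Ioi a, f x‖ ^ 2 ≤ (∫ x in Ioi a, ‖f x‖ ^ 2 * x ^ δ) * (a ^ (1 - δ) / (δ - 1)) := by
  rw [← integral_Ioi_inv_rpow ha hδ]
  exact sq_norm_integral_le_integral_sq_mul_weight_mul_integral_inv
    (ae_restrict_Ioi_rpow_pos ha.le) hf (measurable_id.pow_const δ).aestronglyMeasurable hfw
    (integrableOn_Ioi_inv_rpow ha hδ)

end PowerWeight

lemma locallyIntegrableOn_Ioi_of_integrableOn_Ioc {E : Type*} [NormedAddCommGroup E] {f : ℝ → E}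
    {c : ℝ} (h : ∀ a b : ℝ, c < a → IntegrableOn f (Ioc a b)) : LocallyIntegrableOn f (Ioi c) :=
  fun x hx => ⟨Ioc ((c + x) / 2) (x + 1),
    mem_nhdsWithin_of_mem_nhds (Ioc_mem_nhds (by linarith [mem_Ioi.1 hx]) (by linarith)),
    h _ _ (by linarith [mem_Ioi.1 hx])⟩

lemma setIntegral_Ioi_comp_add_right {E : Type*} [NormedAddCommGroup E] [NormedSpace ℝ E]
    (g : ℝ → E) (a t : ℝ) : ∫ x in Ioi a, g (x + t) = ∫ x in Ioi (a + t), g x := by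
  have := (measurePreserving_add_right volume t).setIntegral_preimage_emb
    (measurableEmbedding_addRight t) g (Ioi (a + t))
  rwa [preimage_add_const_Ioi, add_sub_cancel_right] at this

lemma rpow_one_sub_div_le {m c δ δ' : ℝ} (hm : 1 ≤ m) (hmc : m ≤ c) (hδ' : 1 < δ')
    (hδ : δ' ≤ δ) : c ^ (1 - δ) / (δ - 1) ≤ 1 / (δ' - 1) * m ^ (δ' - δ) := by
  have hc : 0 < c := by linarith
  have hpow : c ^ (1 - δ) ≤ m ^ (δ' - δ) :=
    calc c ^ (1 - δ) = c ^ (1 - δ') * c ^ (δ' - δ) := by rw [← Real.rpow_add hc]; ring_nf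
      _ ≤ 1 * m ^ (δ' - δ) :=
        mul_le_mul (Real.rpow_le_one_of_one_le_of_nonpos (hm.trans hmc) (by linarith))
          (Real.rpow_le_rpow_of_nonpos (by linarith) hmc (by linarith)) (by positivity)
          zero_le_one
      _ = m ^ (δ' - δ) := one_mul _
  rw [one_div_mul_eq_div]
  exact div_le_div₀ (by positivity) hpow (by linarith) (by linarith)

section Weight

variable {δ δ' η : ℝ}

lemma weightV_nonneg {x : ℝ} (hx : 0 ≤ x) : 0 ≤ weightV δ η x := by
  unfold weightV; split <;> exact Real.rpow_nonneg hx _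

lemma weightV_of_one_lt {x : ℝ} (hx : 1 < x) : weightV δ η x = x ^ δ := if_neg hx.not_ge

lemma weightV_le_weightV (hη : 0 ≤ η) (hδ : 0 ≤ δ) {s u : ℝ} (hs : 0 ≤ s) (hsu : s ≤ u) :
    weightV δ η s ≤ weightV δ η u := by
  unfold weightV
  split_ifs with hs1 hu1 hu1
  · exact Real.rpow_le_rpow hs hsu hη
  · exact (Real.rpow_le_one hs hs1 hη).trans (Real.one_le_rpow (by linarith) hδ)
  · linarith
  · exact Real.rpow_le_rpow hs hsu hδ

lemma weightV_sub_le (hη : 0 ≤ η) (hδ' : 0 ≤ δ') (hδ : δ' ≤ δ) {t u : ℝ} (ht : 0 ≤ t)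
    (hu : t < u) : weightV δ' η (u - t) ≤ max 1 t ^ (δ' - δ) * weightV δ η u := by
  have hmono := weightV_le_weightV hη hδ' (sub_nonneg.2 hu.le) (sub_le_self u ht)
  rcases le_or_gt u 1 with hu1 | hu1
  · rw [max_eq_left (by linarith), Real.one_rpow, one_mul]
    simpa only [weightV, if_pos hu1] using hmono
  · have hm : 0 < max 1 t := lt_max_of_lt_left one_pos
    calc weightV δ' η (u - t) ≤ u ^ δ' := by rwa [weightV_of_one_lt hu1] at hmono
      _ = u ^ (δ' - δ) * u ^ δ := by
        rw [← Real.rpow_add (by linarith : (0 : ℝ) < u), sub_add_cancel]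
      _ ≤ max 1 t ^ (δ' - δ) * weightV δ η u := by
        rw [weightV_of_one_lt hu1]
        exact mul_le_mul_of_nonneg_right
          (Real.rpow_le_rpow_of_nonpos hm (max_le hu1.le hu.le) (by linarith)) (by positivity)

lemma sq_mul_weightV_nonneg_on_Ioi {V : Type*} [NormedAddCommGroup V] (f : ℝ → V) :
    ∀ x ∈ Ioi (0 : ℝ), 0 ≤ ‖f x‖ ^ 2 * weightV δ η x :=
  fun _ hx => mul_nonneg (sq_nonneg _) (weightV_nonneg (mem_Ioi.1 hx).le)

lemma setIntegral_Ioi_sq_mul_weightV_le {V : Type*} [NormedAddCommGroup V] {f : ℝ → V}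
    (hfin : IntegrableOn (fun x => ‖f x‖ ^ 2 * weightV δ η x) (Ioi 0)) {a : ℝ} (ha : 0 ≤ a) :
    ∫ x in Ioi a, ‖f x‖ ^ 2 * weightV δ η x ≤ ∫ x in Ioi 0, ‖f x‖ ^ 2 * weightV δ η x :=
  setIntegral_mono_set hfin
    (ae_restrict_of_forall_mem measurableSet_Ioi (sq_mul_weightV_nonneg_on_Ioi f))
    (Ioi_subset_Ioi ha).eventuallyLE

end Weight

section ShiftSemigroup

variable {V : Type*} [NormedAddCommGroup V] {y' : ℝ → V} {δ δ' η t : ℝ}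

lemma sq_norm_sub_limit_le [NormedSpace ℝ V] {y : ℝ → V} (hδ' : 1 < δ') (hδ : δ' ≤ δ)
    (hmeas : AEStronglyMeasurable y' (volume.restrict (Ioi 0)))
    (hftc : ∀ a b : ℝ, 0 < a → a ≤ b → y b - y a = ∫ x in a..b, y' x)
    (hfin : IntegrableOn (fun x => ‖y' x‖ ^ 2 * weightV δ η x) (Ioi 0)) (ht : 0 ≤ t) :
    ‖y (1 + t) - (y 1 + ∫ x in Ioi 1, y' x)‖ ^ 2 ≤
      1 / (δ' - 1) * max 1 t ^ (δ' - δ) * ∫ x in Ioi 0, ‖y' x‖ ^ 2 * weightV δ η x := by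
  have hc : 1 ≤ 1 + t := by linarith
  have hweight : ∀ a, 1 ≤ a → EqOn (fun x => ‖y' x‖ ^ 2 * x ^ δ)
      (fun x => ‖y' x‖ ^ 2 * weightV δ η x) (Ioi a) := fun a ha x hx => by
    simp only [weightV_of_one_lt (ha.trans_lt hx)]
  have hint : ∀ a, 1 ≤ a → IntegrableOn (fun x => ‖y' x‖ ^ 2 * x ^ δ) (Ioi a) := fun a ha =>
    (hfin.mono_set (Ioi_subset_Ioi (by linarith))).congr_fun (hweight a ha).symm measurableSet_Ioi
  have hmeas' : ∀ a, 0 ≤ a → AEStronglyMeasurable y' (volume.restrict (Ioi a)) := fun a ha =>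
    hmeas.mono_measure (Measure.restrict_mono (Ioi_subset_Ioi ha) le_rfl)
  have hy' : IntegrableOn y' (Ioi 1) := integrableOn_Ioi_of_integrableOn_sq_mul_rpow one_pos
    (by linarith) (hmeas' 1 zero_le_one) (hint 1 le_rfl)
  have hlimit : y (1 + t) - (y 1 + ∫ x in Ioi 1, y' x) = -∫ x in Ioi (1 + t), y' x := by
    rw [← intervalIntegral.integral_interval_add_Ioi hy' (hy'.mono_set (Ioi_subset_Ioi hc)),
      ← hftc 1 (1 + t) one_pos hc]
    abel
  rw [hlimit, norm_neg, mul_comm]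
  calc ‖∫ x in Ioi (1 + t), y' x‖ ^ 2
      ≤ (∫ x in Ioi (1 + t), ‖y' x‖ ^ 2 * x ^ δ) * ((1 + t) ^ (1 - δ) / (δ - 1)) :=
        sq_norm_setIntegral_Ioi_le (by linarith) (by linarith) (hmeas' _ (by linarith)) (hint _ hc)
    _ ≤ _ := by
      rw [setIntegral_congr_fun measurableSet_Ioi (hweight _ hc)]
      exact mul_le_mul (setIntegral_Ioi_sq_mul_weightV_le hfin (by linarith))
        (rpow_one_sub_div_le (le_max_left 1 t) (max_le hc (by linarith)) hδ' hδ)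
        (div_nonneg (by positivity) (by linarith))
        (setIntegral_nonneg measurableSet_Ioi (sq_mul_weightV_nonneg_on_Ioi y'))

lemma setIntegral_shift_sq_mul_weightV_le (hη : 0 ≤ η) (hδ' : 0 ≤ δ') (hδ : δ' ≤ δ)
    (hfin : IntegrableOn (fun x => ‖y' x‖ ^ 2 * weightV δ η x) (Ioi 0)) (ht : 0 ≤ t) :
    ∫ x in Ioi 0, ‖y' (x + t)‖ ^ 2 * weightV δ' η x ≤
      max 1 t ^ (δ' - δ) * ∫ x in Ioi 0, ‖y' x‖ ^ 2 * weightV δ η x := by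
  have hshift := setIntegral_Ioi_comp_add_right (fun u => ‖y' u‖ ^ 2 * weightV δ' η (u - t)) 0 t
  simp only [add_sub_cancel_right, zero_add] at hshift
  rw [hshift]
  calc ∫ u in Ioi t, ‖y' u‖ ^ 2 * weightV δ' η (u - t)
      ≤ ∫ u in Ioi t, max 1 t ^ (δ' - δ) * (‖y' u‖ ^ 2 * weightV δ η u) := by
        refine integral_mono_of_nonneg ?_ ((hfin.mono_set (Ioi_subset_Ioi ht)).const_mul _) ?_
        · refine ae_restrict_of_forall_mem measurableSet_Ioi fun u hu => ?_
          exact mul_nonneg (sq_nonneg _) (weightV_nonneg (sub_nonneg.2 (mem_Ioi.1 hu).le))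
        · refine ae_restrict_of_forall_mem measurableSet_Ioi fun u hu => ?_
          dsimp only
          rw [mul_left_comm]
          exact mul_le_mul_of_nonneg_left (weightV_sub_le hη hδ' hδ ht hu) (sq_nonneg _)
    _ = max 1 t ^ (δ' - δ) * ∫ u in Ioi t, ‖y' u‖ ^ 2 * weightV δ η u := integral_const_mul _ _
    _ ≤ _ := mul_le_mul_of_nonneg_left (setIntegral_Ioi_sq_mul_weightV_le hfin ht)
        (Real.rpow_nonneg (zero_le_one.trans (le_max_left 1 t)) _)

end ShiftSemigroup

theorem shift_semigroup_convergence_rate_general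
    {V : Type*} [NormedAddCommGroup V] [InnerProductSpace ℝ V]
    (δ δ' η : ℝ) (hη : η ∈ Set.Ico (0 : ℝ) 1) (hδ' : 1 < δ') (hδ : δ' < δ)
    (y y' : ℝ → V)
    (hloc : ∀ a b : ℝ, 0 < a → IntegrableOn y' (Set.Ioc a b))
    (hftc : ∀ a b : ℝ, 0 < a → a ≤ b → y b - y a = ∫ x in a..b, y' x)
    (hfin : IntegrableOn (fun x => ‖y' x‖ ^ 2 * weightV δ η x) (Set.Ioi 0))
    (t : ℝ) (ht : 0 ≤ t) :
    ‖y (1 + t) - (y 1 + ∫ x in Set.Ioi (1 : ℝ), y' x)‖ ^ 2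
        + (∫ x in Set.Ioi (0 : ℝ), ‖y' (x + t)‖ ^ 2 * weightV δ' η x) ≤
      (2 + 1 / (δ' - 1)) * (max 1 t) ^ (-(δ - δ')) *
        (‖y 1‖ ^ 2 + ∫ x in Set.Ioi (0 : ℝ), ‖y' x‖ ^ 2 * weightV δ η x) := by
  have hmeas := (locallyIntegrableOn_Ioi_of_integrableOn_Ioc hloc).aestronglyMeasurable
  have hvalue := sq_norm_sub_limit_le (δ' := δ') hδ' hδ.le hmeas hftc hfin ht
  have hderiv := setIntegral_shift_sq_mul_weightV_le hη.1 (by linarith) hδ.le hfin ht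
  have hI : 0 ≤ ∫ x in Ioi 0, ‖y' x‖ ^ 2 * weightV δ η x :=
    setIntegral_nonneg measurableSet_Ioi (sq_mul_weightV_nonneg_on_Ioi y')
  have hP : 0 < max 1 t ^ (δ' - δ) := Real.rpow_pos_of_pos (lt_max_of_lt_left one_pos) _
  have hA : 0 < 1 / (δ' - 1) := one_div_pos.2 (by linarith)
  rw [neg_sub]
  nlinarith [mul_nonneg hP.le hI, mul_nonneg hP.le (sq_nonneg ‖y 1‖),
    mul_nonneg (mul_nonneg hA.le hP.le) (sq_nonneg ‖y 1‖)]

/-- Let `η ∈ [0,1)`, `1 < δ' < δ`, and let `(y,y')` be a pair with `y'`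
locally Bochner integrable, `y(b) − y(a) = ∫_a^b y'` and `N_{δ,η}(y) < ∞`.  Set
`y(∞) := y(1) + ∫_1^∞ y'`.  Then for every `t ≥ 0`:
`‖y(1+t) − y(∞)‖² + ∫_0^∞ ‖y'(x+t)‖² v_{δ',η}(x) dx
  ≤ (2 + 1/(δ'−1)) (max(1,t))^{−(δ−δ')} N_{δ,η}(y)²`. -/
theorem shift_semigroup_convergence_rate
    {V : Type*} [NormedAddCommGroup V] [InnerProductSpace ℝ V]
    [SecondCountableTopology V] [CompleteSpace V]
    (δ δ' η : ℝ) (hη : η ∈ Set.Ico (0 : ℝ) 1) (hδ' : 1 < δ') (hδ : δ' < δ)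
    (y y' : ℝ → V)
    (hloc : ∀ a b : ℝ, 0 < a → IntegrableOn y' (Set.Ioc a b))
    (hftc : ∀ a b : ℝ, 0 < a → a ≤ b → y b - y a = ∫ x in a..b, y' x)
    (hfin : IntegrableOn (fun x => ‖y' x‖ ^ 2 * weightV δ η x) (Set.Ioi 0))
    (t : ℝ) (ht : 0 ≤ t) :
    ‖y (1 + t) - (y 1 + ∫ x in Set.Ioi (1 : ℝ), y' x)‖ ^ 2
        + (∫ x in Set.Ioi (0 : ℝ), ‖y' (x + t)‖ ^ 2 * weightV δ' η x) ≤
      (2 + 1 / (δ' - 1)) * (max 1 t) ^ (-(δ - δ')) *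
        (‖y 1‖ ^ 2 + ∫ x in Set.Ioi (0 : ℝ), ‖y' x‖ ^ 2 * weightV δ η x) :=
  shift_semigroup_convergence_rate_general δ δ' η hη hδ' hδ y y' hloc hftc hfin t ht
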